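/- arXiv:2312.14298 — 5 statements merged into one kernel-verified Lean document; each statement's English description precedes it below -/
import Mathlib

section
/- If n ≠ 3, then every vertex of the path P_n belongs to some minimal zero forcing set of P_n. -/
namespace ZF

variable {V : Type*}

/-- The set of vertices forced blue starting from `S`, under the standard color change
rule: a blue vertex with exactly one white neighbor forces that neighbor blue. -/
inductive Forced (G : SimpleGraph V) (S : Set V) : V → Prop
  | init {v : V} : v ∈ S → Forced G S v
  | force {u w : V} : Forced G S u → G.Adj u w →
      (∀ x, G.Adj u x → x ≠ w → Forced G S x) → Forced G S w

/-- `S` is a zero forcing set of `G`. -/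
def IsZFS (G : SimpleGraph V) (S : Set V) : Prop := ∀ v, Forced G S v

/-- `S` is a minimal zero forcing set of `G`. -/
def IsMinimalZFS (G : SimpleGraph V) (S : Set V) : Prop :=
  IsZFS G S ∧ ∀ S' ⊂ S, ¬ IsZFS G S'

/-- The zero forcing number of `G`. -/
noncomputable def zfNum (G : SimpleGraph V) : ℕ :=
  sInf {n | ∃ S : Set V, IsZFS G S ∧ S.ncard = n}

/-- A graph is well-forced if every minimal zero forcing set is minimum. -/
def WellForced (G : SimpleGraph V) : Prop :=
  ∀ S, IsMinimalZFS G S → S.ncard = zfNum G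

/-- Degree of a vertex (as the `ncard` of its neighbor set). -/
noncomputable def deg (G : SimpleGraph V) (v : V) : ℕ := (G.neighborSet v).ncard

end ZF

open ZF SimpleGraph

section Aux

variable {V : Type*} {G : SimpleGraph V} {S T : Set V}

lemma forced_mono (h : S ⊆ T) {v : V} (hv : Forced G S v) : Forced G T v := by
  induction hv with
  | init h' => exact Forced.init (h h')
  | force h1 h2 h3 ih1 ih3 => exact Forced.force ih1 h2 ih3

lemma not_forced_empty {v : V} : ¬ Forced G (∅ : Set V) v := by
  intro h
  induction h with
  | init h' => exact h'
  | force h1 h2 h3 ih1 ih3 => exact ih1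

lemma zfs_mono (h : S ⊆ T) (hS : IsZFS G S) : IsZFS G T :=
  fun v => forced_mono h (hS v)

lemma minimal_singleton {v : V} (hz : IsZFS G {v}) : IsMinimalZFS G {v} := by
  refine ⟨hz, ?_⟩
  intro S' hS' hz'
  rw [Set.ssubset_singleton_iff] at hS'
  subst hS'
  exact not_forced_empty (hz' v)

lemma minimal_pair {v w : V} (hvw : v ≠ w) (hz : IsZFS G {v, w})
    (hv : ¬ IsZFS G {v}) (hw : ¬ IsZFS G {w}) : IsMinimalZFS G {v, w} := by
  refine ⟨hz, ?_⟩
  intro S' hS' hz'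
  by_cases hwS : w ∈ S'
  · have hvS : v ∉ S' := by
      intro hvS
      apply hS'.2
      intro x hx
      rcases hx with rfl | rfl
      · exact hvS
      · exact hwS
    have : S' ⊆ {w} := by
      intro x hx
      rcases hS'.1 hx with rfl | rfl
      · exact absurd hx hvS
      · rfl
    exact hw (zfs_mono this hz')
  · have : S' ⊆ {v} := by
      intro x hx
      rcases hS'.1 hx with rfl | rfl
      · rfl
      · exact absurd hx hwS
    exact hv (zfs_mono this hz')

end Aux

section Path

variable {n : ℕ} {S : Set (Fin n)}

lemma forced_up (a : Fin n) (h0 : Forced (pathGraph n) S a)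
    (hlow : ∀ x : Fin n, x.val + 1 = a.val → Forced (pathGraph n) S x) :
    ∀ j : Fin n, a.val ≤ j.val → Forced (pathGraph n) S j := by
  suffices H : ∀ k, ∀ j : Fin n, j.val = k → a.val ≤ k → Forced (pathGraph n) S j by
    intro j hj; exact H j.val j rfl hj
  intro k
  induction k using Nat.strong_induction_on with
  | _ k ih =>
    intro j hj hak
    rcases eq_or_lt_of_le hak with heq | hlt
    · have : j = a := Fin.ext (by omega)
      exact this ▸ h0
    · have hm : k - 1 < n := by have := j.isLt; omega
      have hforced_m : Forced (pathGraph n) S ⟨k - 1, hm⟩ :=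
        ih (k - 1) (by omega) _ rfl (by omega)
      refine Forced.force hforced_m ?_ ?_
      · rw [pathGraph_adj]; left; simp only []; omega
      · intro x hx hxj
        rw [pathGraph_adj] at hx
        rcases hx with h1 | h2
        · simp only [] at h1
          exact absurd (Fin.ext (by omega) : x = j) hxj
        · simp only [] at h2
          by_cases hxa : x.val + 1 = a.val
          · exact hlow x hxa
          · exact ih x.val (by omega) x rfl (by omega)

lemma forced_down (a : Fin n) (h0 : Forced (pathGraph n) S a)
    (hhigh : ∀ x : Fin n, x.val = a.val + 1 → Forced (pathGraph n) S x) :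
    ∀ j : Fin n, j.val ≤ a.val → Forced (pathGraph n) S j := by
  suffices H : ∀ d, ∀ j : Fin n, a.val - j.val = d → j.val ≤ a.val →
      Forced (pathGraph n) S j by
    intro j hj; exact H _ j rfl hj
  intro d
  induction d using Nat.strong_induction_on with
  | _ d ih =>
    intro j hd hja
    rcases eq_or_lt_of_le hja with heq | hlt
    · have : j = a := Fin.ext heq
      exact this ▸ h0
    · have hm : j.val + 1 < n := by have := a.isLt; omega
      have hforced_m : Forced (pathGraph n) S ⟨j.val + 1, hm⟩ :=
        ih (a.val - (j.val + 1)) (by omega) _ rfl (show j.val + 1 ≤ a.val by omega)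
      refine Forced.force hforced_m ?_ ?_
      · rw [pathGraph_adj]; right; simp only []
      · intro x hx hxj
        rw [pathGraph_adj] at hx
        rcases hx with h1 | h2
        · simp only [] at h1
          by_cases hxa : x.val = a.val + 1
          · exact hhigh x hxa
          · exact ih (a.val - x.val) (by omega) x rfl (by omega)
        · simp only [] at h2
          exact absurd (Fin.ext (by omega) : x = j) hxj

lemma zfs_endpoint_zero (h : 0 < n) : IsZFS (pathGraph n) {(⟨0, h⟩ : Fin n)} := by
  intro j
  have h0 : Forced (pathGraph n) ({(⟨0, h⟩ : Fin n)} : Set (Fin n)) ⟨0, h⟩ :=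
    Forced.init rfl
  exact forced_up ⟨0, h⟩ h0
    (fun x hx => absurd (show x.val + 1 = 0 from hx) (by omega))
    j (Nat.zero_le _)

lemma zfs_endpoint_last (h : 0 < n) :
    IsZFS (pathGraph n) {(⟨n - 1, by omega⟩ : Fin n)} := by
  intro j
  have h0 : Forced (pathGraph n) ({(⟨n - 1, by omega⟩ : Fin n)} : Set (Fin n))
      ⟨n - 1, by omega⟩ := Forced.init rfl
  refine forced_down _ h0 (fun x hx => absurd x.isLt ?_) j ?_
  · simp only [] at hx; omega
  · have := j.isLt; simp only []; omega

lemma zfs_pair (u : Fin n) (hu : u.val + 1 < n) :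
    IsZFS (pathGraph n) {u, (⟨u.val + 1, hu⟩ : Fin n)} := by
  intro j
  have hiu : Forced (pathGraph n) ({u, (⟨u.val + 1, hu⟩ : Fin n)} : Set (Fin n)) u :=
    Forced.init (Or.inl rfl)
  have hiw : Forced (pathGraph n) ({u, (⟨u.val + 1, hu⟩ : Fin n)} : Set (Fin n))
      ⟨u.val + 1, hu⟩ := Forced.init (Or.inr rfl)
  rcases le_or_gt j.val u.val with h | h
  · refine forced_down u hiu ?_ j h
    intro x hx
    have hxe : x = (⟨u.val + 1, hu⟩ : Fin n) := Fin.ext hx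
    exact hxe ▸ hiw
  · refine forced_up ⟨u.val + 1, hu⟩ hiw ?_ j h
    intro x hx
    simp only [] at hx
    have hxe : x = u := Fin.ext (by omega)
    exact hxe ▸ hiu

lemma forced_singleton_interior {v : Fin n} (h1 : 0 < v.val) (h2 : v.val + 1 < n)
    {x : Fin n} (hx : Forced (pathGraph n) {v} x) : x = v := by
  induction hx with
  | init h => exact h
  | @force u w hu hadj hall ihu ihall =>
    subst ihu
    exfalso
    rw [pathGraph_adj] at hadj
    rcases hadj with hw1 | hw2
    · have h0 : (⟨u.val - 1, by omega⟩ : Fin n) = u := by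
        refine ihall _ ?_ ?_
        · rw [pathGraph_adj]; right; simp only []; omega
        · intro he
          have := congrArg Fin.val he
          simp only [] at this
          omega
      have := congrArg Fin.val h0
      simp only [] at this
      omega
    · have h0 : (⟨u.val + 1, by omega⟩ : Fin n) = u := by
        refine ihall _ ?_ ?_
        · rw [pathGraph_adj]; left; simp only []
        · intro he
          have := congrArg Fin.val he
          simp only [] at this
          omega
      have := congrArg Fin.val h0
      simp only [] at this
      omega

lemma not_zfs_singleton_interior {v : Fin n} (h1 : 0 < v.val) (h2 : v.val + 1 < n) :
    ¬ IsZFS (pathGraph n) {v} := by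
  intro h
  have h0 : (⟨0, by omega⟩ : Fin n) = v :=
    forced_singleton_interior h1 h2 (h ⟨0, by omega⟩)
  have := congrArg Fin.val h0
  simp only [] at this
  omega

end Path

/-- If `n ≠ 3`, then every vertex of the path `P n` belongs to some
minimal zero forcing set of `P n`. -/
theorem path_every_vertex_minimal (n : ℕ) (hn : n ≠ 3) (v : Fin n) :
    ∃ S : Set (Fin n), IsMinimalZFS (pathGraph n) S ∧ v ∈ S := by
  have hvlt := v.isLt
  by_cases h0 : v.val = 0
  · have hv : v = ⟨0, by omega⟩ := Fin.ext h0
    rw [hv]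
    exact ⟨_, minimal_singleton (zfs_endpoint_zero (by omega)), rfl⟩
  · by_cases hlast : v.val = n - 1
    · have hv : v = ⟨n - 1, by omega⟩ := Fin.ext hlast
      rw [hv]
      exact ⟨_, minimal_singleton (zfs_endpoint_last (by omega)), rfl⟩
    · have hv1 : 0 < v.val := Nat.pos_of_ne_zero h0
      have hv2 : v.val + 1 < n := by omega
      have hn4 : 4 ≤ n := by omega
      by_cases hcase : v.val + 2 < n
      · refine ⟨{v, ⟨v.val + 1, hv2⟩}, minimal_pair ?_ ?_ ?_ ?_, Or.inl rfl⟩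
        · intro he
          have h' : v.val = v.val + 1 := congrArg Fin.val he
          omega
        · exact zfs_pair v hv2
        · exact not_zfs_singleton_interior hv1 hv2
        · exact not_zfs_singleton_interior (show 0 < v.val + 1 by omega)
            (show v.val + 1 + 1 < n by omega)
      · have hvval : v.val + 2 = n := by omega
        have hul : v.val - 1 < n := by omega
        have hu1 : (⟨v.val - 1, hul⟩ : Fin n).val + 1 < n := by
          show v.val - 1 + 1 < n; omega
        have hz := zfs_pair ⟨v.val - 1, hul⟩ hu1
        have hw : (⟨(⟨v.val - 1, hul⟩ : Fin n).val + 1, hu1⟩ : Fin n) = v := by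
          apply Fin.ext
          show v.val - 1 + 1 = v.val
          omega
        rw [hw] at hz
        refine ⟨{⟨v.val - 1, hul⟩, v}, minimal_pair ?_ hz ?_ ?_, Or.inr rfl⟩
        · intro he
          have h' : v.val - 1 = v.val := congrArg Fin.val he
          omega
        · exact not_zfs_singleton_interior (show 0 < v.val - 1 by omega)
            (show v.val - 1 + 1 < n by omega)
        · exact not_zfs_singleton_interior hv1 hv2
end

section
/- If T is a generalized star in which at most one leg has length one, then every vertex of T lies in some minimal zero forcing set of T. -/
open ZF SimpleGraph

/-- A structure witnessing that `G` is a generalized star with center `c` and `ℓ` legs: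
the vertex set consists of `c` together with `ℓ` disjoint legs, the `i`-th leg being a
path `leg i 0, leg i 1, …, leg i (len i - 1)` attached to `c` at `leg i 0`, and these
are the only adjacencies in `G`.  The length of the `i`-th leg (its number of edges,
counted from `c` to the leaf) is `len i`. -/
structure GenStar {V : Type*} (G : SimpleGraph V) (c : V) (ℓ : ℕ) where
  len : Fin ℓ → ℕ
  len_pos : ∀ i, 1 ≤ len i
  leg : Fin ℓ → ℕ → V
  ne_center : ∀ i j, j < len i → leg i j ≠ c
  inj : ∀ i j i' j', j < len i → j' < len i' → leg i j = leg i' j' → i = i' ∧ j = j'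
  cover : ∀ v, v = c ∨ ∃ i j, j < len i ∧ leg i j = v
  adj_iff : ∀ a b, G.Adj a b ↔
    ((a = c ∧ ∃ i, b = leg i 0) ∨ (b = c ∧ ∃ i, a = leg i 0) ∨
      (∃ i j, j + 1 < len i ∧
        ((a = leg i j ∧ b = leg i (j + 1)) ∨ (b = leg i j ∧ a = leg i (j + 1)))))

section Aux

open ZF

variable {V : Type*}

theorem ZF.Forced.mono {G : SimpleGraph V} {S S' : Set V} (hSS : S ⊆ S') :
    ∀ {v}, Forced G S v → Forced G S' v := by
  intro v hv
  induction hv with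
  | init h => exact .init (hSS h)
  | force _ ha _ ihu ihx => exact .force ihu ha ihx

theorem ZF.IsZFS.mono {G : SimpleGraph V} {S S' : Set V} (hSS : S ⊆ S') (h : IsZFS G S) :
    IsZFS G S' := fun v => (h v).mono hSS

theorem forced_subset {G : SimpleGraph V} {S A : Set V} (hSA : S ⊆ A)
    (hA : ∀ u w, u ∈ A → G.Adj u w → (∀ x, G.Adj u x → x ≠ w → x ∈ A) → w ∈ A) :
    ∀ {v}, Forced G S v → v ∈ A := by
  intro v hv
  induction hv with
  | init h => exact hSA h
  | force _ ha _ ihu ihx => exact hA _ _ ihu ha ihx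

theorem minimal_of_cosingleton {G : SimpleGraph V} {S : Set V} (hZ : IsZFS G S)
    (h : ∀ a ∈ S, ¬ IsZFS G (S \ {a})) : IsMinimalZFS G S := by
  refine ⟨hZ, fun S' hsub hZ' => ?_⟩
  obtain ⟨a, haS, haS'⟩ := Set.ssubset_iff_of_subset hsub.1 |>.mp hsub
  exact h a haS (hZ'.mono (fun x hx => ⟨hsub.1 hx, fun he => haS' (he ▸ hx)⟩))

end Aux

namespace GenStar

open ZF

variable {V : Type*} {T : SimpleGraph V} {c : V} {ℓ : ℕ} (hT : GenStar T c ℓ)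

theorem adj_center {b : V} : T.Adj c b ↔ ∃ i, b = hT.leg i 0 := by
  rw [hT.adj_iff]
  constructor
  · rintro (⟨-, h⟩ | ⟨-, i, h⟩ | ⟨i, j, hj, (⟨h, -⟩ | ⟨-, h⟩)⟩)
    · exact h
    · exact absurd h.symm (hT.ne_center i 0 (hT.len_pos i))
    · exact absurd h.symm (hT.ne_center i j (by omega))
    · exact absurd h.symm (hT.ne_center i (j+1) hj)
  · exact fun h => Or.inl ⟨rfl, h⟩

theorem adj_leg {i : Fin ℓ} {j : ℕ} (hj : j < hT.len i) {b : V} :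
    T.Adj (hT.leg i j) b ↔
      (j = 0 ∧ b = c) ∨ (∃ j', j = j' + 1 ∧ b = hT.leg i j') ∨
        (j + 1 < hT.len i ∧ b = hT.leg i (j + 1)) := by
  rw [hT.adj_iff]
  constructor
  · rintro (⟨h, -⟩ | ⟨hb, i', h⟩ | ⟨i', j', hj', (⟨h1, h2⟩ | ⟨h2, h1⟩)⟩)
    · exact absurd h (hT.ne_center i j hj)
    · obtain ⟨rfl, rfl⟩ := hT.inj i j i' 0 hj (hT.len_pos i') h
      exact Or.inl ⟨rfl, hb⟩
    · obtain ⟨rfl, rfl⟩ := hT.inj i j i' j' hj (by omega) h1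
      exact Or.inr (Or.inr ⟨hj', h2⟩)
    · obtain ⟨rfl, rfl⟩ := hT.inj i j i' (j'+1) hj hj' h1
      exact Or.inr (Or.inl ⟨j', rfl, h2⟩)
  · rintro (⟨rfl, rfl⟩ | ⟨j', rfl, rfl⟩ | ⟨h, rfl⟩)
    · exact Or.inr (Or.inl ⟨rfl, i, rfl⟩)
    · exact Or.inr (Or.inr ⟨i, j', hj, Or.inr ⟨rfl, rfl⟩⟩)
    · exact Or.inr (Or.inr ⟨i, j, h, Or.inl ⟨rfl, rfl⟩⟩)

theorem leg_ne_leg {i i' : Fin ℓ} {j j' : ℕ} (hj : j < hT.len i) (hj' : j' < hT.len i')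
    (h : i ≠ i' ∨ j ≠ j') : hT.leg i j ≠ hT.leg i' j' := by
  intro he
  obtain ⟨h1, h2⟩ := hT.inj i j i' j' hj hj' he
  rcases h with h | h
  · exact h h1
  · exact h h2

theorem chain_up {S : Set V} {i : Fin ℓ} :
    ∀ (d j : ℕ), j + d < hT.len i → Forced T S (hT.leg i j) →
      (∀ x, T.Adj (hT.leg i j) x → x ≠ hT.leg i (j + 1) → Forced T S x) →
      Forced T S (hT.leg i (j + d))
  | 0, j, _, hf, _ => hf
  | d + 1, j, hj, hf, hprev => by
      have hj1 : j + 1 < hT.len i := by omega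
      have hnext : Forced T S (hT.leg i (j + 1)) :=
        .force hf ((hT.adj_leg (by omega)).mpr (Or.inr (Or.inr ⟨hj1, rfl⟩))) hprev
      have hres : Forced T S (hT.leg i (j + 1 + d)) := by
        refine chain_up d (j+1) (by omega) hnext (fun x hadj hxne => ?_)
        rcases (hT.adj_leg hj1).mp hadj with ⟨h0, -⟩ | ⟨j', hj', rfl⟩ | ⟨-, rfl⟩
        · exact absurd h0 (Nat.succ_ne_zero j)
        · have hjj : j' = j := by omega
          subst hjj; exact hf
        · exact absurd rfl hxne
      have he : j + (d + 1) = j + 1 + d := by omega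
      rw [he]; exact hres

theorem chain_down {S : Set V} {i : Fin ℓ} :
    ∀ (j : ℕ), j < hT.len i → Forced T S (hT.leg i j) →
      (j + 1 < hT.len i → Forced T S (hT.leg i (j + 1))) →
      Forced T S c ∧ ∀ j' ≤ j, Forced T S (hT.leg i j')
  | 0, hj, hf, hnext => by
      have hc : Forced T S c := by
        refine .force hf ((hT.adj_leg hj).mpr (Or.inl ⟨rfl, rfl⟩)) (fun x hadj hxne => ?_)
        rcases (hT.adj_leg hj).mp hadj with ⟨-, rfl⟩ | ⟨j', hj', rfl⟩ | ⟨h1, rfl⟩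
        · exact absurd rfl hxne
        · exact absurd hj'.symm (Nat.succ_ne_zero j')
        · exact hnext h1
      refine ⟨hc, fun j' hj' => ?_⟩
      have : j' = 0 := Nat.le_zero.mp hj'
      subst this; exact hf
  | j + 1, hj, hf, hnext => by
      have hp : Forced T S (hT.leg i j) := by
        refine .force hf ((hT.adj_leg hj).mpr (Or.inr (Or.inl ⟨j, rfl, rfl⟩)))
          (fun x hadj hxne => ?_)
        rcases (hT.adj_leg hj).mp hadj with ⟨h0, -⟩ | ⟨j', hj', rfl⟩ | ⟨h1, rfl⟩
        · exact absurd h0 (Nat.succ_ne_zero j)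
        · have hjj : j' = j := by omega
          subst hjj; exact absurd rfl hxne
        · exact hnext h1
      obtain ⟨hc, hall⟩ := chain_down j (by omega) hp (fun _ => hf)
      refine ⟨hc, fun j' hj' => ?_⟩
      rcases Nat.lt_or_ge j' (j+1) with h | h
      · exact hall j' (by omega)
      · have : j' = j + 1 := by omega
        subst this; exact hf

theorem force_center {S : Set V} {m : Fin ℓ} (hc : Forced T S c)
    (h : ∀ k, k ≠ m → Forced T S (hT.leg k 0)) : Forced T S (hT.leg m 0) := by
  refine .force hc (hT.adj_center.mpr ⟨m, rfl⟩) (fun x hadj hxne => ?_)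
  obtain ⟨k, rfl⟩ := hT.adj_center.mp hadj
  exact h k (fun he => hxne (by rw [he]))

theorem chain_up_zero {S : Set V} {i : Fin ℓ} (hc : Forced T S c)
    (h0 : Forced T S (hT.leg i 0)) : ∀ j, j < hT.len i → Forced T S (hT.leg i j) := by
  intro j hj
  have hres : Forced T S (hT.leg i (0 + j)) := by
    refine hT.chain_up j 0 (by omega) h0 (fun x hadj hxne => ?_)
    rcases (hT.adj_leg (hT.len_pos i)).mp hadj with ⟨-, rfl⟩ | ⟨j', hj', -⟩ | ⟨-, rfl⟩
    · exact hc
    · exact absurd hj'.symm (Nat.succ_ne_zero j')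
    · exact absurd rfl hxne
  rwa [Nat.zero_add] at hres

theorem stalled_closed {A : Set V}
    (hA : ∀ u ∈ A, ∃ x y, T.Adj u x ∧ T.Adj u y ∧ x ≠ y ∧ x ∉ A ∧ y ∉ A) :
    ∀ u w, u ∈ A → T.Adj u w → (∀ x, T.Adj u x → x ≠ w → x ∈ A) → w ∈ A := by
  intro u w hu _ hyp
  obtain ⟨x, y, hax, hay, hxy, hxA, hyA⟩ := hA u hu
  by_cases hxw : x = w
  · subst hxw
    exact absurd (hyp y hay (fun h => hxy h.symm)) hyA
  · exact absurd (hyp x hax hxw) hxA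

theorem not_zfs_of {S A : Set V} (hSA : S ⊆ A)
    (hclosed : ∀ u w, u ∈ A → T.Adj u w → (∀ x, T.Adj u x → x ≠ w → x ∈ A) → w ∈ A)
    {t : V} (ht : t ∉ A) : ¬ IsZFS T S :=
  fun h => ht (forced_subset hSA hclosed (h t))

end GenStar

namespace GenStar

open ZF

variable {V : Type*} {T : SimpleGraph V} {c : V} {ℓ : ℕ} (hT : GenStar T c ℓ)

theorem exists_ne_fin (hℓ : 2 ≤ ℓ) (m : Fin ℓ) : ∃ k : Fin ℓ, k ≠ m := by
  by_cases h : m = ⟨0, by omega⟩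
  · exact ⟨⟨1, by omega⟩, by rw [h]; exact Fin.ne_of_val_ne one_ne_zero⟩
  · exact ⟨⟨0, by omega⟩, fun he => h he.symm⟩

/-- The set of vertices reachable when legs `m` and `k` have been cut off. -/
def blocked (m k : Fin ℓ) : Set V :=
  {x | x = c ∨ ∃ k', k' ≠ m ∧ k' ≠ k ∧ ∃ j', j' < hT.len k' ∧ x = hT.leg k' j'}

theorem leg_not_blocked {m k k0 : Fin ℓ} {j0 : ℕ} (h : j0 < hT.len k0)
    (hk : k0 = m ∨ k0 = k) : hT.leg k0 j0 ∉ hT.blocked m k := by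
  rintro (he | ⟨k', hm', hk', j', hj', he⟩)
  · exact hT.ne_center k0 j0 h he
  · obtain ⟨rfl, rfl⟩ := hT.inj _ _ _ _ h hj' he
    rcases hk with rfl | rfl
    exacts [hm' rfl, hk' rfl]

theorem blocked_closed (m k : Fin ℓ) (hmk : m ≠ k) :
    ∀ u w, u ∈ hT.blocked m k → T.Adj u w →
      (∀ x, T.Adj u x → x ≠ w → x ∈ hT.blocked m k) → w ∈ hT.blocked m k := by
  intro u w hu hadj hyp
  rcases hu with rfl | ⟨k', hm', hk', j', hj', rfl⟩
  · have hm0 : hT.leg m 0 ∉ hT.blocked m k := hT.leg_not_blocked (hT.len_pos m) (Or.inl rfl)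
    have hk0 : hT.leg k 0 ∉ hT.blocked m k := hT.leg_not_blocked (hT.len_pos k) (Or.inr rfl)
    by_cases hw : w = hT.leg m 0
    · exact absurd (hyp (hT.leg k 0) (hT.adj_center.mpr ⟨k, rfl⟩)
        (by rw [hw]; exact hT.leg_ne_leg (hT.len_pos k) (hT.len_pos m) (Or.inl hmk.symm))) hk0
    · exact absurd (hyp (hT.leg m 0) (hT.adj_center.mpr ⟨m, rfl⟩)
        (fun h => hw h.symm)) hm0
  · rcases (hT.adj_leg hj').mp hadj with ⟨-, rfl⟩ | ⟨j'', hj'', rfl⟩ | ⟨h1, rfl⟩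
    · exact Or.inl rfl
    · exact Or.inr ⟨k', hm', hk', j'', by omega, rfl⟩
    · exact Or.inr ⟨k', hm', hk', j' + 1, h1, rfl⟩

theorem caseA (hℓ : 2 ≤ ℓ) (m : Fin ℓ) :
    IsMinimalZFS T {x | ∃ k, k ≠ m ∧ x = hT.leg k (hT.len k - 1)} := by
  set S : Set V := {x | ∃ k, k ≠ m ∧ x = hT.leg k (hT.len k - 1)} with hS
  have hdownk : ∀ k, k ≠ m → Forced T S c ∧ ∀ j' ≤ hT.len k - 1, Forced T S (hT.leg k j') := by
    intro k hk
    exact hT.chain_down (hT.len k - 1) (by have := hT.len_pos k; omega)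
      (.init ⟨k, hk, rfl⟩) (fun h => absurd h (by have := hT.len_pos k; omega))
  obtain ⟨k0, hk0⟩ := exists_ne_fin hℓ m
  have hc : Forced T S c := (hdownk k0 hk0).1
  have h0 : ∀ k, k ≠ m → Forced T S (hT.leg k 0) := fun k hk => (hdownk k hk).2 0 (by omega)
  have hm0 : Forced T S (hT.leg m 0) := hT.force_center hc h0
  have hZ : IsZFS T S := by
    intro x
    rcases hT.cover x with rfl | ⟨k, j, hj, rfl⟩
    · exact hc
    · by_cases hk : k = m
      · subst hk; exact hT.chain_up_zero hc hm0 j hj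
      · exact (hdownk k hk).2 j (by have := hT.len_pos k; omega)
  refine minimal_of_cosingleton hZ ?_
  rintro a ⟨k, hk, rfl⟩
  refine not_zfs_of (T := T) (A := hT.blocked m k) ?_ (hT.blocked_closed m k (fun h => hk h.symm))
    (hT.leg_not_blocked (hT.len_pos m) (Or.inl rfl))
  rintro x ⟨⟨k', hk', rfl⟩, hxa⟩
  have hkk : k' ≠ k := fun he => hxa (by subst he; rfl)
  exact Or.inr ⟨k', hk', hkk, hT.len k' - 1, by have := hT.len_pos k'; omega, rfl⟩

theorem caseB (m : Fin ℓ) (hm2 : ∀ k, k ≠ m → 2 ≤ hT.len k) :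
    IsMinimalZFS T {x | x = c ∨ ∃ k, k ≠ m ∧ x = hT.leg k 0} := by
  set S : Set V := {x | x = c ∨ ∃ k, k ≠ m ∧ x = hT.leg k 0} with hS
  have hc : Forced T S c := .init (Or.inl rfl)
  have h0 : ∀ k, k ≠ m → Forced T S (hT.leg k 0) := fun k hk => .init (Or.inr ⟨k, hk, rfl⟩)
  have hm0 : Forced T S (hT.leg m 0) := hT.force_center hc h0
  have hZ : IsZFS T S := by
    intro x
    rcases hT.cover x with rfl | ⟨k, j, hj, rfl⟩
    · exact hc
    · by_cases hk : k = m
      · subst hk; exact hT.chain_up_zero hc hm0 j hj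
      · exact hT.chain_up_zero hc (h0 k hk) j hj
  refine minimal_of_cosingleton hZ ?_
  rintro a (rfl | ⟨k, hk, rfl⟩)
  · -- remove the center
    refine not_zfs_of (T := T) (A := {x | ∃ k, k ≠ m ∧ x = hT.leg k 0}) ?sub1
      (stalled_closed (T := T) ?stall1) (t := a) ?tgt1
    case sub1 =>
      rintro x ⟨(rfl | h), hxa⟩
      · exact absurd rfl hxa
      · exact h
    case stall1 =>
      rintro u ⟨k, hk, rfl⟩
      have hlk : 2 ≤ hT.len k := hm2 k hk
      refine ⟨a, hT.leg k 1, (hT.adj_leg (hT.len_pos k)).mpr (Or.inl ⟨rfl, rfl⟩),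
        (hT.adj_leg (hT.len_pos k)).mpr (Or.inr (Or.inr ⟨by omega, rfl⟩)), ?_, ?_, ?_⟩
      · exact (hT.ne_center k 1 (by omega)).symm
      · rintro ⟨k', hk', he⟩; exact hT.ne_center k' 0 (hT.len_pos k') he.symm
      · rintro ⟨k', hk', he⟩
        exact hT.leg_ne_leg (by omega) (hT.len_pos k') (Or.inr one_ne_zero) he
    case tgt1 =>
      rintro ⟨k', hk', he⟩; exact hT.ne_center k' 0 (hT.len_pos k') he.symm
  · -- remove leg k 0
    refine not_zfs_of (T := T) (A := hT.blocked m k) ?_ (hT.blocked_closed m k (fun h => hk h.symm))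
      (hT.leg_not_blocked (hT.len_pos m) (Or.inl rfl))
    rintro x ⟨ (rfl | ⟨k', hk', rfl⟩), hxa⟩
    · exact Or.inl rfl
    · have hkk : k' ≠ k := fun he => hxa (by subst he; rfl)
      exact Or.inr ⟨k', hk', hkk, 0, hT.len_pos k', rfl⟩

theorem caseC (i m : Fin ℓ) (him : i ≠ m) (p : ℕ) (hp : p + 2 < hT.len i)
    (hm2 : ∀ k, k ≠ m → k ≠ i → 2 ≤ hT.len k) :
    IsMinimalZFS T {x | x = hT.leg i p ∨ x = hT.leg i (p + 1) ∨
      ∃ k, k ≠ m ∧ k ≠ i ∧ x = hT.leg k 0} := by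
  set S : Set V := {x | x = hT.leg i p ∨ x = hT.leg i (p + 1) ∨
      ∃ k, k ≠ m ∧ k ≠ i ∧ x = hT.leg k 0} with hS
  have hfp : Forced T S (hT.leg i p) := .init (Or.inl rfl)
  have hfp1 : Forced T S (hT.leg i (p + 1)) := .init (Or.inr (Or.inl rfl))
  have hup : ∀ q, p + 1 ≤ q → q < hT.len i → Forced T S (hT.leg i q) := by
    intro q h1 h2
    obtain ⟨d, rfl⟩ := Nat.exists_eq_add_of_le h1
    refine hT.chain_up d (p + 1) h2 hfp1 (fun x hadj hxne => ?_)
    rcases (hT.adj_leg (by omega)).mp hadj with ⟨h0, -⟩ | ⟨j', hj', rfl⟩ | ⟨-, rfl⟩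
    · exact absurd h0 (Nat.succ_ne_zero p)
    · have hjp : j' = p := by omega
      subst hjp; exact hfp
    · exact absurd rfl hxne
  obtain ⟨hc, hdown⟩ := hT.chain_down p (by omega) hfp (fun _ => hfp1)
  have h0 : ∀ k, k ≠ m → Forced T S (hT.leg k 0) := by
    intro k hk
    by_cases hki : k = i
    · subst hki; exact hdown 0 (by omega)
    · exact .init (Or.inr (Or.inr ⟨k, hk, hki, rfl⟩))
  have hm0 : Forced T S (hT.leg m 0) := hT.force_center hc h0
  have hZ : IsZFS T S := by
    intro x
    rcases hT.cover x with rfl | ⟨k, j, hj, rfl⟩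
    · exact hc
    · by_cases hk : k = m
      · subst hk; exact hT.chain_up_zero hc hm0 j hj
      · by_cases hki : k = i
        · subst hki
          rcases Nat.lt_or_ge j (p + 1) with h | h
          · exact hdown j (by omega)
          · exact hup j h hj
        · exact hT.chain_up_zero hc (h0 k hk) j hj
  refine minimal_of_cosingleton hZ ?_
  rintro a (rfl | rfl | ⟨k, hk, hki, rfl⟩)
  · -- remove leg i p
    refine not_zfs_of (T := T)
      (A := {x | x = hT.leg i (p + 1) ∨ ∃ k, k ≠ m ∧ k ≠ i ∧ x = hT.leg k 0}) ?sub2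
      (stalled_closed (T := T) ?stall2) (t := c) ?tgt2
    case sub2 =>
      rintro x ⟨(rfl | rfl | h), hxa⟩
      · exact absurd rfl hxa
      · exact Or.inl rfl
      · exact Or.inr h
    case stall2 =>
      rintro u (rfl | ⟨k, hk, hki, rfl⟩)
      · refine ⟨hT.leg i p, hT.leg i (p + 2),
          (hT.adj_leg (by omega)).mpr (Or.inr (Or.inl ⟨p, rfl, rfl⟩)),
          (hT.adj_leg (by omega)).mpr (Or.inr (Or.inr ⟨hp, rfl⟩)),
          hT.leg_ne_leg (by omega) (by omega) (Or.inr (by omega)), ?_, ?_⟩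
        · rintro (he | ⟨k, hk, hki, he⟩)
          · exact hT.leg_ne_leg (by omega) (by omega) (Or.inr (by omega)) he
          · exact hT.leg_ne_leg (by omega) (hT.len_pos k) (Or.inl (fun h => hki h.symm)) he
        · rintro (he | ⟨k, hk, hki, he⟩)
          · exact hT.leg_ne_leg (by omega) (by omega) (Or.inr (by omega)) he
          · exact hT.leg_ne_leg (by omega) (hT.len_pos k) (Or.inl (fun h => hki h.symm)) he
      · have hlk : 2 ≤ hT.len k := hm2 k hk hki
        refine ⟨c, hT.leg k 1, (hT.adj_leg (hT.len_pos k)).mpr (Or.inl ⟨rfl, rfl⟩),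
          (hT.adj_leg (hT.len_pos k)).mpr (Or.inr (Or.inr ⟨by omega, rfl⟩)), ?_, ?_, ?_⟩
        · exact (hT.ne_center k 1 (by omega)).symm
        · rintro (he | ⟨k', hk', hki', he⟩)
          · exact hT.ne_center i (p + 1) (by omega) he.symm
          · exact hT.ne_center k' 0 (hT.len_pos k') he.symm
        · rintro (he | ⟨k', hk', hki', he⟩)
          · exact hT.leg_ne_leg (by omega) (by omega) (Or.inl hki) he
          · exact hT.leg_ne_leg (by omega) (hT.len_pos k') (Or.inr one_ne_zero) he
    case tgt2 =>
      rintro (he | ⟨k', hk', hki', he⟩)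
      · exact hT.ne_center i (p + 1) (by omega) he.symm
      · exact hT.ne_center k' 0 (hT.len_pos k') he.symm
  · -- remove leg i (p+1)
    refine not_zfs_of (T := T)
      (A := {x | x = hT.leg i p ∨ ∃ k, k ≠ m ∧ k ≠ i ∧ x = hT.leg k 0}) ?sub3
      (stalled_closed (T := T) ?stall3) (t := c) ?tgt3
    case sub3 =>
      rintro x ⟨(rfl | rfl | h), hxa⟩
      · exact Or.inl rfl
      · exact absurd rfl hxa
      · exact Or.inr h
    case stall3 =>
      rintro u (rfl | ⟨k, hk, hki, rfl⟩)
      · rcases Nat.eq_zero_or_pos p with rfl | hppos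
        · refine ⟨c, hT.leg i 1, (hT.adj_leg (by omega)).mpr (Or.inl ⟨rfl, rfl⟩),
            (hT.adj_leg (by omega)).mpr (Or.inr (Or.inr ⟨by omega, rfl⟩)), ?_, ?_, ?_⟩
          · exact (hT.ne_center i 1 (by omega)).symm
          · rintro (he | ⟨k', hk', hki', he⟩)
            · exact hT.ne_center i 0 (by omega) he.symm
            · exact hT.ne_center k' 0 (hT.len_pos k') he.symm
          · rintro (he | ⟨k', hk', hki', he⟩)
            · exact hT.leg_ne_leg (by omega) (by omega) (Or.inr one_ne_zero) he
            · exact hT.leg_ne_leg (by omega) (hT.len_pos k') (Or.inl (fun h => hki' h.symm)) he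
        · obtain ⟨q, rfl⟩ : ∃ q, p = q + 1 := ⟨p - 1, by omega⟩
          refine ⟨hT.leg i q, hT.leg i (q + 2),
            (hT.adj_leg (by omega)).mpr (Or.inr (Or.inl ⟨q, rfl, rfl⟩)),
            (hT.adj_leg (by omega)).mpr (Or.inr (Or.inr ⟨by omega, rfl⟩)),
            hT.leg_ne_leg (by omega) (by omega) (Or.inr (by omega)), ?_, ?_⟩
          · rintro (he | ⟨k', hk', hki', he⟩)
            · exact hT.leg_ne_leg (by omega) (by omega) (Or.inr (by omega)) he
            · exact hT.leg_ne_leg (by omega) (hT.len_pos k') (Or.inl (fun h => hki' h.symm)) he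
          · rintro (he | ⟨k', hk', hki', he⟩)
            · exact hT.leg_ne_leg (by omega) (by omega) (Or.inr (by omega)) he
            · exact hT.leg_ne_leg (by omega) (hT.len_pos k') (Or.inl (fun h => hki' h.symm)) he
      · have hlk : 2 ≤ hT.len k := hm2 k hk hki
        refine ⟨c, hT.leg k 1, (hT.adj_leg (hT.len_pos k)).mpr (Or.inl ⟨rfl, rfl⟩),
          (hT.adj_leg (hT.len_pos k)).mpr (Or.inr (Or.inr ⟨by omega, rfl⟩)), ?_, ?_, ?_⟩
        · exact (hT.ne_center k 1 (by omega)).symm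
        · rintro (he | ⟨k', hk', hki', he⟩)
          · exact hT.ne_center i p (by omega) he.symm
          · exact hT.ne_center k' 0 (hT.len_pos k') he.symm
        · rintro (he | ⟨k', hk', hki', he⟩)
          · exact hT.leg_ne_leg (by omega) (by omega) (Or.inl hki) he
          · exact hT.leg_ne_leg (by omega) (hT.len_pos k') (Or.inr one_ne_zero) he
    case tgt3 =>
      rintro (he | ⟨k', hk', hki', he⟩)
      · exact hT.ne_center i p (by omega) he.symm
      · exact hT.ne_center k' 0 (hT.len_pos k') he.symm
  · -- remove leg k 0
    refine not_zfs_of (T := T) (A := hT.blocked m k) ?_ (hT.blocked_closed m k (fun h => hk h.symm))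
      (hT.leg_not_blocked (hT.len_pos m) (Or.inl rfl))
    rintro x ⟨(rfl | rfl | ⟨k', hk', hki', rfl⟩), hxa⟩
    · exact Or.inr ⟨i, him, fun h => hki h.symm, p, by omega, rfl⟩
    · exact Or.inr ⟨i, him, fun h => hki h.symm, p + 1, by omega, rfl⟩
    · have hkk : k' ≠ k := fun he => hxa (by subst he; rfl)
      exact Or.inr ⟨k', hk', hkk, 0, hT.len_pos k', rfl⟩

end GenStar

/-- If `T` is a generalized star in which at most one leg has length one,
then every vertex of `T` lies in some minimal zero forcing set of `T`. -/
theorem genstar_every_vertex_minimal {V : Type*} [Fintype V] (T : SimpleGraph V)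
    (c : V) (ℓ : ℕ) (hℓ : 2 ≤ ℓ) (hT : GenStar T c ℓ)
    (hshort : {i : Fin ℓ | hT.len i = 1}.ncard ≤ 1) (v : V) :
    ∃ S : Set V, IsMinimalZFS T S ∧ v ∈ S := by
  classical
  have hpick : ∀ i0 : Fin ℓ, 2 ≤ hT.len i0 →
      ∃ m, m ≠ i0 ∧ ∀ k, k ≠ m → 2 ≤ hT.len k := by
    intro i0 hi0
    by_cases hE : ∃ i1, hT.len i1 = 1
    · obtain ⟨i1, h1⟩ := hE
      refine ⟨i1, fun he => by rw [he] at h1; omega, fun k hk => ?_⟩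
      by_contra h
      have hk1 : hT.len k = 1 := by have := hT.len_pos k; omega
      have hsub : {i1, k} ⊆ {i : Fin ℓ | hT.len i = 1} := by
        rintro x (rfl | rfl)
        · exact h1
        · exact hk1
      have h2 : ({i1, k} : Set (Fin ℓ)).ncard = 2 := Set.ncard_pair (fun he => hk he.symm)
      have := Set.ncard_le_ncard hsub (Set.toFinite _)
      omega
    · push_neg at hE
      obtain ⟨m, hm⟩ := GenStar.exists_ne_fin hℓ i0
      exact ⟨m, hm, fun k _ => by have := hT.len_pos k; have := hE k; omega⟩
  have hlong : ∃ i1, 2 ≤ hT.len i1 := by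
    by_contra h
    push_neg at h
    have hall : ∀ i : Fin ℓ, hT.len i = 1 := fun i => by
      have := hT.len_pos i; have := h i; omega
    have huniv : {i : Fin ℓ | hT.len i = 1} = Set.univ := Set.eq_univ_of_forall hall
    rw [huniv, Set.ncard_univ, Nat.card_eq_fintype_card, Fintype.card_fin] at hshort
    omega
  rcases hT.cover v with rfl | ⟨i, j, hj, rfl⟩
  · obtain ⟨i1, hi1⟩ := hlong
    obtain ⟨m, -, hm2⟩ := hpick i1 hi1
    exact ⟨_, hT.caseB m hm2, Or.inl rfl⟩
  · by_cases hleaf : j + 1 = hT.len i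
    · obtain ⟨m, hm⟩ := GenStar.exists_ne_fin hℓ i
      refine ⟨_, hT.caseA hℓ m, ⟨i, fun he => hm he.symm, ?_⟩⟩
      congr 1
      omega
    · have hj2 : j + 1 < hT.len i := by omega
      rcases Nat.eq_zero_or_pos j with rfl | hjpos
      · obtain ⟨m, hmi, hm2⟩ := hpick i (by omega)
        exact ⟨_, hT.caseB m hm2, Or.inr ⟨i, fun he => hmi he.symm, rfl⟩⟩
      · obtain ⟨p, rfl⟩ : ∃ p, j = p + 1 := ⟨j - 1, by omega⟩
        obtain ⟨m, hmi, hm2⟩ := hpick i (by omega)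
        exact ⟨_, hT.caseC i m (fun he => hmi he.symm) p (by omega) (fun k hk _ => hm2 k hk),
          Or.inr (Or.inl rfl)⟩
end

section
/- Let G be a graph containing a pendent generalized star R with ℓ legs. Then any zero forcing set of G contains a vertex from at least ℓ − 1 of the legs of R. -/
open ZF SimpleGraph

/-- A structure witnessing that `G` contains a pendent generalized star with center `c`
and `ℓ ≥ 2` legs: `c` is a vertex of degree at least 3 in `G`, and the legs are `ℓ`
pairwise disjoint components of `G - c` that are pendent paths at `c`.  The `i`-th leg
is the path `leg i 0, …, leg i (len i - 1)`, attached to `c` at `leg i 0`, whose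
internal vertices have degree 2 in `G` and whose end vertex has degree 1 in `G`.
The length of the `i`-th leg is `len i`. -/
structure PendentStar {V : Type*} (G : SimpleGraph V) (c : V) (ℓ : ℕ) where
  two_le : 2 ≤ ℓ
  deg_center : 3 ≤ deg G c
  len : Fin ℓ → ℕ
  len_pos : ∀ i, 1 ≤ len i
  leg : Fin ℓ → ℕ → V
  ne_center : ∀ i j, j < len i → leg i j ≠ c
  inj : ∀ i j i' j', j < len i → j' < len i' → leg i j = leg i' j' → i = i' ∧ j = j'
  adj_center : ∀ i, G.Adj c (leg i 0)
  adj_chain : ∀ i j, j + 1 < len i → G.Adj (leg i j) (leg i (j + 1))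
  deg_mid : ∀ i j, j + 1 < len i → deg G (leg i j) = 2
  deg_last : ∀ i, deg G (leg i (len i - 1)) = 1

/-- The vertex set of a pendent generalized star. -/
def PendentStar.verts {V : Type*} {G : SimpleGraph V} {c : V} {ℓ : ℕ}
    (R : PendentStar G c ℓ) : Set V :=
  {c} ∪ {v | ∃ i j, j < R.len i ∧ R.leg i j = v}

/-- A "fort" — a set disjoint from `S` such that every outside vertex adjacent to it
has at least two neighbors in it — can never be forced. -/
lemma fort_not_forced {V : Type*} {G : SimpleGraph V} {S F : Set V}
    (hdisj : ∀ v ∈ F, v ∉ S)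
    (hfort : ∀ u w, u ∉ F → w ∈ F → G.Adj u w → ∃ x ∈ F, x ≠ w ∧ G.Adj u x) :
    ∀ v, Forced G S v → v ∉ F := by
  intro v hv
  induction hv with
  | init h => exact fun hF => hdisj _ hF h
  | @force u w hu hadj hall ihu ihall =>
    intro hwF
    obtain ⟨x, hxF, hxw, hadjx⟩ := hfort u w ihu hwF hadj
    exact ihall x hadjx hxw hxF

/-- Any neighbor of a leg vertex is either another vertex of the same leg, or the
center (and then the leg vertex is the first one). -/
lemma PendentStar.neighbor_of_leg {V : Type*} [Fintype V] {G : SimpleGraph V}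
    {c : V} {ℓ : ℕ} (R : PendentStar G c ℓ) {a : Fin ℓ} {j : ℕ} (hj : j < R.len a)
    {u : V} (hadj : G.Adj u (R.leg a j)) :
    (∃ j', j' < R.len a ∧ R.leg a j' = u) ∨ (u = c ∧ j = 0) := by
  set w := R.leg a j with hw
  by_cases hmid : j + 1 < R.len a
  · -- internal vertex, degree 2
    set p : V := if j = 0 then c else R.leg a (j - 1) with hp
    set q : V := R.leg a (j + 1) with hq
    have hadjp : G.Adj w p := by
      rcases Nat.eq_zero_or_pos j with h0 | h0
      · subst h0
        simp only [hp, if_pos rfl, hw]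
        exact (R.adj_center a).symm
      · simp only [hp, if_neg (Nat.pos_iff_ne_zero.mp h0)]
        have h := R.adj_chain a (j - 1) (by omega)
        rw [show j - 1 + 1 = j from Nat.succ_pred_eq_of_pos h0] at h
        exact h.symm
    have hadjq : G.Adj w q := R.adj_chain a j hmid
    have hpq : p ≠ q := by
      rcases Nat.eq_zero_or_pos j with h0 | h0
      · subst h0
        simp only [hp, if_pos rfl, hq]
        exact fun h => R.ne_center a (0 + 1) hmid h.symm
      · simp only [hp, if_neg (Nat.pos_iff_ne_zero.mp h0), hq]
        intro h
        have := (R.inj a (j - 1) a (j + 1) (by omega) hmid h).2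
        omega
    have hsub : ({p, q} : Set V) ⊆ G.neighborSet w := by
      intro x hx
      rcases hx with h | h
      · exact h ▸ hadjp
      · exact (Set.mem_singleton_iff.mp h) ▸ hadjq
    have hcard : (G.neighborSet w).ncard ≤ ({p, q} : Set V).ncard := by
      rw [Set.ncard_pair hpq]
      exact (R.deg_mid a j hmid).le
    have heq : ({p, q} : Set V) = G.neighborSet w :=
      Set.eq_of_subset_of_ncard_le hsub hcard (Set.toFinite _)
    have hu : u ∈ ({p, q} : Set V) := by
      rw [heq]; exact hadj.symm
    rcases hu with h | h
    · rcases Nat.eq_zero_or_pos j with h0 | h0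
      · subst h0; simp only [hp, if_pos rfl] at h; exact Or.inr ⟨h, rfl⟩
      · left; simp only [hp, if_neg (Nat.pos_iff_ne_zero.mp h0)] at h
        exact ⟨j - 1, by omega, h.symm⟩
    · left; exact ⟨j + 1, hmid, (Set.mem_singleton_iff.mp h).symm⟩
  · -- last vertex, degree 1
    have hjlast : j = R.len a - 1 := by omega
    set p : V := if j = 0 then c else R.leg a (j - 1) with hp
    have hadjp : G.Adj w p := by
      rcases Nat.eq_zero_or_pos j with h0 | h0
      · subst h0
        simp only [hp, if_pos rfl, hw]
        exact (R.adj_center a).symm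
      · simp only [hp, if_neg (Nat.pos_iff_ne_zero.mp h0)]
        have h := R.adj_chain a (j - 1) (by omega)
        rw [show j - 1 + 1 = j from Nat.succ_pred_eq_of_pos h0] at h
        exact h.symm
    have hsub : ({p} : Set V) ⊆ G.neighborSet w := by
      intro x hx; rw [Set.mem_singleton_iff.mp hx]; exact hadjp
    have hcard : (G.neighborSet w).ncard ≤ ({p} : Set V).ncard := by
      rw [Set.ncard_singleton]
      have := R.deg_last a
      rw [← hjlast] at this
      exact this.le
    have heq : ({p} : Set V) = G.neighborSet w :=
      Set.eq_of_subset_of_ncard_le hsub hcard (Set.toFinite _)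
    have hu : u ∈ ({p} : Set V) := by rw [heq]; exact hadj.symm
    rw [Set.mem_singleton_iff] at hu
    rcases Nat.eq_zero_or_pos j with h0 | h0
    · subst h0; simp only [hp, if_pos rfl] at hu; exact Or.inr ⟨hu, rfl⟩
    · left; simp only [hp, if_neg (Nat.pos_iff_ne_zero.mp h0)] at hu
      exact ⟨j - 1, by omega, hu.symm⟩

/-- Let `G` be a graph containing a pendent generalized star `R` with `ℓ`
legs.  Then any zero forcing set of `G` contains a vertex from at least `ℓ - 1` of the
legs of `R`. -/
theorem pendentstar_legs_meet_zfs {V : Type*} [Fintype V] (G : SimpleGraph V)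
    (c : V) (ℓ : ℕ) (R : PendentStar G c ℓ) (S : Set V) (hS : IsZFS G S) :
    ℓ - 1 ≤ {i : Fin ℓ | ∃ j, j < R.len i ∧ R.leg i j ∈ S}.ncard := by
  classical
  by_contra hcon
  push_neg at hcon
  set T := {i : Fin ℓ | ∃ j, j < R.len i ∧ R.leg i j ∈ S} with hT
  have hsum : T.ncard + Tᶜ.ncard = ℓ := by
    have := Set.ncard_add_ncard_compl T
    simpa using this
  have h2 : 1 < Tᶜ.ncard := by
    have h2le := R.two_le
    omega
  obtain ⟨i, i', hi, hi', hii⟩ := (Set.one_lt_ncard_iff (Set.toFinite _)).mp h2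
  set F : Set V := {v | ∃ j, j < R.len i ∧ R.leg i j = v} ∪
      {v | ∃ j, j < R.len i' ∧ R.leg i' j = v} with hF
  have hmemF : ∀ a : Fin ℓ, (a = i ∨ a = i') → ∀ j, j < R.len a → R.leg a j ∈ F := by
    rintro a (rfl | rfl) j hj
    · exact Or.inl ⟨j, hj, rfl⟩
    · exact Or.inr ⟨j, hj, rfl⟩
  have hdisj : ∀ v ∈ F, v ∉ S := by
    rintro v (⟨j, hj, rfl⟩ | ⟨j, hj, rfl⟩) hvS
    · exact hi ⟨j, hj, hvS⟩
    · exact hi' ⟨j, hj, hvS⟩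
  have key : ∀ a b : Fin ℓ, (a = i ∨ a = i') → (b = i ∨ b = i') → a ≠ b →
      ∀ u j, j < R.len a → u ∉ F → G.Adj u (R.leg a j) →
      ∃ x ∈ F, x ≠ R.leg a j ∧ G.Adj u x := by
    intro a b ha hb hab u j hj huF hadj
    rcases R.neighbor_of_leg hj hadj with ⟨j', hj', rfl⟩ | ⟨rfl, rfl⟩
    · exact absurd (hmemF a ha j' hj') huF
    · refine ⟨R.leg b 0, hmemF b hb 0 (R.len_pos b), ?_, R.adj_center b⟩
      intro h
      exact hab ((R.inj b 0 a 0 (R.len_pos b) hj h).1).symm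
  have hfort : ∀ u w, u ∉ F → w ∈ F → G.Adj u w → ∃ x ∈ F, x ≠ w ∧ G.Adj u x := by
    rintro u w huF (⟨j, hj, rfl⟩ | ⟨j, hj, rfl⟩) hadj
    · exact key i i' (Or.inl rfl) (Or.inr rfl) hii u j hj huF hadj
    · exact key i' i (Or.inr rfl) (Or.inl rfl) (Ne.symm hii) u j hj huF hadj
  exact fort_not_forced hdisj hfort _ (hS (R.leg i 0))
    (hmemF i (Or.inl rfl) 0 (R.len_pos i))
end

section
/- Given any path cover of a tree T, the set S formed by choosing from each path either one of its end vertices or a pair of adjacent internal vertices is a zero forcing set of T. -/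
open ZF SimpleGraph

/-!
The vertices that are never forced form a fort (every other vertex has none or at least two
neighbours in it) avoiding the chosen vertices, so it suffices to show that such a fort `W` is
empty. Root the tree anywhere: the cover path whose vertex nearest to the root is deepest is
joined to the other paths through a single vertex `x`. If `x` is white, `W` minus this path is a
fort of the union of the other paths. Otherwise the path has no white neighbour outside it, so
blue propagates along it from the chosen end or pair of vertices, and `W` is a fort of the other
paths. Either way, induction on the number of paths concludes.
-/

open Set

namespace SimpleGraph

variable {V : Type*} {G : SimpleGraph V}

lemma IsAcyclic.support_subset_support_of_isPath (hG : G.IsAcyclic) {u v : V} {p : G.Walk u v}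
    (hp : p.IsPath) (w : G.Walk u v) : p.support ⊆ w.support := by
  classical
  have hpw : p = w.bypass :=
    congrArg Subtype.val <| (hG.subsingleton_path u v).elim ⟨p, hp⟩ ⟨_, w.bypass_isPath⟩
  exact hpw ▸ w.support_bypass_subset_support

lemma Walk.dist_lt_of_mem_support {r v z : V} (w : G.Walk r v)
    (hw : w.length = G.dist r v) (hz : z ∈ w.support) (hzv : z ≠ v) :
    G.dist r z < G.dist r v := by
  classical
  calc G.dist r z ≤ (w.takeUntil z hz).length := dist_le _
    _ < w.length := Walk.length_takeUntil_lt_length hz hzv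
    _ = G.dist r v := hw

lemma IsTree.mem_support_of_dist_eq_add_one (hG : G.IsTree) {r b y : V} (hby : G.Adj b y)
    (hd : G.dist r y = G.dist r b + 1) (w : G.Walk r y) : b ∈ w.support := by
  obtain ⟨g, hg⟩ := hG.connected.exists_walk_length_eq_dist r b
  have hpath : (g.concat hby).IsPath :=
    (g.concat hby).isPath_of_length_eq_dist (by rw [Walk.length_concat, hg, hd])
  exact hG.isAcyclic.support_subset_support_of_isPath hpath w (by simp [Walk.support_concat])

lemma IsTree.dist_eq_add_one_of_walk (hG : G.IsTree) {r s b y : V} (hby : G.Adj b y)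
    (w : G.Walk s y) (hb : b ∉ w.support) (hs : G.dist r s ≤ G.dist r b) :
    G.dist r b = G.dist r y + 1 := by
  refine (hG.dist_eq_dist_add_one_of_adj r hby).resolve_right fun hd => ?_
  obtain ⟨g, hg⟩ := hG.connected.exists_walk_length_eq_dist r s
  have hbg : b ∈ g.support := by
    have := hG.mem_support_of_dist_eq_add_one hby hd (g.append w)
    rw [Walk.mem_support_append_iff] at this
    exact this.resolve_right hb
  have := g.dist_lt_of_mem_support hg hbg fun h => hb (h ▸ w.start_mem_support)
  omega

lemma IsTree.eq_of_dist_eq_add_one (hG : G.IsTree) {r b₁ b₂ y₁ y₂ : V}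
    (h₁ : G.Adj b₁ y₁) (h₂ : G.Adj b₂ y₂)
    (hd₁ : G.dist r b₁ = G.dist r y₁ + 1) (hd₂ : G.dist r b₂ = G.dist r y₂ + 1)
    (w : G.Walk b₁ b₂) (hy₁ : y₁ ∉ w.support) (hy₂ : y₂ ∉ w.support) : y₁ = y₂ := by
  have closer : ∀ {b₁ b₂ y₁ y₂ : V}, G.Adj b₁ y₁ → G.Adj b₂ y₂ →
      G.dist r b₂ = G.dist r y₂ + 1 → ∀ w : G.Walk b₁ b₂, y₂ ∉ w.support →
      y₂ = y₁ ∨ G.dist r y₂ < G.dist r y₁ := by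
    intro b₁ b₂ y₁ y₂ h₁ h₂ hd₂ w hy₂
    obtain ⟨g, hg⟩ := hG.connected.exists_walk_length_eq_dist r y₁
    have := hG.mem_support_of_dist_eq_add_one h₂.symm hd₂ ((g.concat h₁.symm).append w)
    rw [Walk.mem_support_append_iff, Walk.support_concat, List.mem_append,
      List.mem_singleton] at this
    rcases this with (hyg | rfl) | hyw
    · exact or_iff_not_imp_left.2 (g.dist_lt_of_mem_support hg hyg)
    · exact absurd w.start_mem_support hy₂
    · exact absurd hyw hy₂
  rcases closer h₁ h₂ hd₂ w hy₂ with h | h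
  · exact h.symm
  rcases closer h₂ h₁ hd₁ w.reverse (by simpa using hy₁) with h' | h'
  · exact h'
  · omega

section Chain

variable {f : ℕ → V} {n : ℕ}

lemma exists_isPath_of_chain (hf : ∀ j, j + 1 < n → G.Adj (f j) (f (j + 1)))
    (hinj : InjOn f (Iio n)) {j k : ℕ} (hjk : j ≤ k) (hk : k < n) :
    ∃ w : G.Walk (f j) (f k), w.IsPath ∧ ∀ z ∈ w.support, z ∈ f '' Icc j k := by
  induction k, hjk using Nat.le_induction with
  | base => exact ⟨.nil, .nil, by simp⟩
  | succ k hjk ih =>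
    obtain ⟨w, hw, hsupp⟩ := ih (by omega)
    have hnew : f (k + 1) ∉ w.support := fun h => by
      obtain ⟨t, ht, hft⟩ := hsupp _ h
      simp only [mem_Icc] at ht
      have : t = k + 1 := hinj (by simp only [mem_Iio]; omega) hk hft
      omega
    refine ⟨w.concat (hf k hk), hw.concat hnew _, fun z hz => ?_⟩
    rw [Walk.support_concat, List.mem_append, List.mem_singleton] at hz
    rcases hz with hz | rfl
    · exact image_mono (Icc_subset_Icc_right (by omega)) (hsupp z hz)
    · exact mem_image_of_mem f ⟨by omega, le_rfl⟩

lemma exists_walk_of_chain (hf : ∀ j, j + 1 < n → G.Adj (f j) (f (j + 1)))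
    (hinj : InjOn f (Iio n)) {a b : V} (ha : a ∈ f '' Iio n) (hb : b ∈ f '' Iio n) :
    ∃ w : G.Walk a b, ∀ z ∈ w.support, z ∈ f '' Iio n := by
  obtain ⟨j, hj, rfl⟩ := ha
  obtain ⟨k, hk, rfl⟩ := hb
  have hIcc : ∀ {j k : ℕ}, k < n → f '' Icc j k ⊆ f '' Iio n :=
    fun hk => image_mono fun t ht => lt_of_le_of_lt ht.2 hk
  rcases le_total j k with h | h
  · obtain ⟨w, -, hw⟩ := exists_isPath_of_chain hf hinj h hk
    exact ⟨w, fun z hz => hIcc hk (hw z hz)⟩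
  · obtain ⟨w, -, hw⟩ := exists_isPath_of_chain hf hinj h hj
    exact ⟨w.reverse, fun z hz => hIcc hj (hw z (by simpa using hz))⟩

lemma IsAcyclic.eq_add_one_or_of_adj_chain (hG : G.IsAcyclic)
    (hf : ∀ j, j + 1 < n → G.Adj (f j) (f (j + 1))) (hinj : InjOn f (Iio n)) {j k : ℕ}
    (hj : j < n) (hk : k < n) (hadj : G.Adj (f j) (f k)) : k = j + 1 ∨ j = k + 1 := by
  wlog hjk : j < k generalizing j k with H
  · rcases (not_lt.1 hjk).lt_or_eq with h | rfl
    · exact (H hk hj hadj.symm h).symm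
    · exact absurd rfl hadj.ne
  by_contra hne
  obtain ⟨w, hw, hsupp⟩ := exists_isPath_of_chain hf hinj (j := j + 1) (by omega) hk
  have hfj : f j ∉ w.support := fun h => by
    obtain ⟨t, ht, hft⟩ := hsupp _ h
    have : t = j := hinj (lt_of_le_of_lt ht.2 hk) hj hft
    simp only [mem_Icc] at ht
    omega
  have hsub := hG.support_subset_support_of_isPath (hw.cons hfj (h := hf j (by omega)))
    (Walk.cons hadj Walk.nil)
  have hmem : f (j + 1) ∈ (Walk.cons hadj Walk.nil).support := hsub (by simp)
  simp only [Walk.support_cons, Walk.support_nil, List.mem_cons,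
    List.not_mem_nil, or_false] at hmem
  rcases hmem with h | h
  · have := hinj (by simp only [mem_Iio]; omega) hj h
    omega
  · have := hinj (by simp only [mem_Iio]; omega) hk h
    omega

end Chain

end SimpleGraph

namespace ZF

variable {V : Type*}

/-- `B j` says that vertex `j` of the path `0, 1, …, n - 1` is blue. -/
lemma forall_lt_of_propagates {n : ℕ} {B : ℕ → Prop}
    (up : ∀ j, j + 1 < n → B j → (j = 0 ∨ B (j - 1)) → B (j + 1))
    (down : ∀ j, j + 1 < n → B (j + 1) → (j + 2 = n ∨ B (j + 2)) → B j)
    (hB : B 0 ∨ B (n - 1) ∨ ∃ q, q + 1 < n ∧ B q ∧ B (q + 1)) :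
    ∀ j < n, B j := by
  have from_pair : ∀ q, q + 1 < n → B q → B (q + 1) → ∀ j < n, B j := by
    intro q hq hq₀ hq₁
    have above : ∀ d, q + d + 1 < n → B (q + d) ∧ B (q + d + 1) := by
      intro d
      induction d with
      | zero => exact fun _ => ⟨hq₀, hq₁⟩
      | succ d ih =>
        intro hd
        obtain ⟨h₀, h₁⟩ := ih (by omega)
        exact ⟨h₁, up _ hd h₁ (Or.inr (by simpa using h₀))⟩
    have below : ∀ d ≤ q, B (q - d) ∧ B (q - d + 1) := by
      intro d
      induction d with
      | zero => exact fun _ => ⟨hq₀, hq₁⟩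
      | succ d ih =>
        intro hd
        obtain ⟨h₀, h₁⟩ := ih (by omega)
        have e : q - (d + 1) + 1 = q - d := by omega
        refine ⟨down _ (by omega) (e ▸ h₀) (Or.inr ?_), e ▸ h₀⟩
        rwa [show q - (d + 1) + 2 = q - d + 1 by omega]
    intro j hj
    rcases le_or_gt q j with h | h
    · rcases Nat.eq_zero_or_pos (j - q) with h' | h'
      · simpa [show j = q by omega] using hq₀
      · simpa [show q + (j - q - 1) + 1 = j by omega] using (above (j - q - 1) (by omega)).2
    · simpa [show q - (q - j) = j by omega] using (below (q - j) (by omega)).1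
  intro j hj
  rcases Nat.lt_or_ge n 2 with hn | hn
  · obtain rfl : j = 0 := by omega
    rcases hB with h | h | ⟨q, hq, -⟩
    · exact h
    · simpa [show n - 1 = 0 by omega] using h
    · omega
  rcases hB with h | h | ⟨q, hq, h₀, h₁⟩
  · exact from_pair 0 (by omega) h (up 0 (by omega) h (Or.inl rfl)) j hj
  · have e : n - 2 + 1 = n - 1 := by omega
    exact from_pair (n - 2) (by omega)
      (down _ (by omega) (e ▸ h) (Or.inl (by omega))) (e ▸ h) j hj
  · exact from_pair q hq h₀ h₁ j hj

section Fort

variable {G : SimpleGraph V} {U U' W P S : Set V}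

/-- `W` is a fort of the subgraph induced on `U`, except that `W` may be empty. -/
def IsFortIn (G : SimpleGraph V) (U W : Set V) : Prop :=
  W ⊆ U ∧ ∀ v ∈ U, v ∉ W → ∀ w ∈ W, G.Adj v w → ∃ w' ∈ W, w' ≠ w ∧ G.Adj v w'

lemma IsFortIn.mono (hW : IsFortIn G U W) (hU' : U' ⊆ U) (hWU' : W ⊆ U') :
    IsFortIn G U' W :=
  ⟨hWU', fun v hv => hW.2 v (hU' hv)⟩

lemma IsFortIn.diff (hW : IsFortIn G U W)
    (hP : ∀ v ∈ U \ P, v ∉ W → ∀ b ∈ P, ¬ G.Adj v b) : IsFortIn G (U \ P) (W \ P) := by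
  refine ⟨sdiff_subset_sdiff_left hW.1, fun v hv hvW w hw hvw => ?_⟩
  have hvW : v ∉ W := fun h => hvW ⟨h, hv.2⟩
  obtain ⟨w', hw', hne, hvw'⟩ := hW.2 v hv.1 hvW w hw.1 hvw
  exact ⟨w', ⟨hw', fun hP' => hP v hv hvW w' hP' hvw'⟩, hne, hvw'⟩

lemma isFortIn_univ_setOf_not_forced (G : SimpleGraph V) (S : Set V) :
    IsFortIn G univ {v | ¬ Forced G S v} := by
  refine ⟨subset_univ _, fun v _ hv w hw hvw => ?_⟩
  by_contra! h
  exact hw (.force (not_not.1 hv) hvw fun x hvx hxw => not_not.1 fun hx => h x hx hxw hvx)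

lemma isZFS_of_forall_isFortIn (h : ∀ W, IsFortIn G univ W → Disjoint S W → W = ∅) :
    IsZFS G S := by
  have hW := h _ (isFortIn_univ_setOf_not_forced G S)
    (disjoint_left.2 fun v hv hv' => hv' (.init hv))
  exact fun v => not_not.1 fun hv => (hW ▸ hv : v ∈ (∅ : Set V))

end Fort

section PathCover

variable {T : SimpleGraph V}

def ContainsEndOrEdge (S : Set V) (f : ℕ → V) (n : ℕ) : Prop :=
  f 0 ∈ S ∨ f (n - 1) ∈ S ∨ ∃ q, q + 1 < n ∧ f q ∈ S ∧ f (q + 1) ∈ S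

lemma disjoint_image_of_isFortIn {f : ℕ → V} {n : ℕ} {U W S : Set V} (hT : T.IsAcyclic)
    (hf : ∀ j, j + 1 < n → T.Adj (f j) (f (j + 1))) (hinj : InjOn f (Iio n))
    (hW : IsFortIn T U W) (hU : f '' Iio n ⊆ U)
    (hout : ∀ b ∈ f '' Iio n, ∀ y ∉ f '' Iio n, T.Adj b y → y ∉ W)
    (hSW : Disjoint S W) (hS : ContainsEndOrEdge S f n) : Disjoint (f '' Iio n) W := by
  have step : ∀ j k, j < n → k < n → (k = j + 1 ∨ j = k + 1) → f j ∉ W → f k ∈ W →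
      ∃ k' < n, (k' = j + 1 ∨ j = k' + 1) ∧ k' ≠ k ∧ f k' ∈ W := by
    intro j k hj hk hjk hfj hfk
    have hadj : T.Adj (f j) (f k) := by
      rcases hjk with rfl | rfl
      exacts [hf j hk, (hf k hj).symm]
    obtain ⟨w, hw, hne, hjw⟩ := hW.2 (f j) (hU ⟨j, hj, rfl⟩) hfj (f k) hfk hadj
    by_cases hwP : w ∈ f '' Iio n
    · obtain ⟨k', hk', rfl⟩ := hwP
      exact ⟨k', hk', hT.eq_add_one_or_of_adj_chain hf hinj hj hk' hjw,
        fun h => hne (h ▸ rfl), hw⟩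
    · exact absurd hw (hout _ ⟨j, hj, rfl⟩ w hwP hjw)
  have hblue := forall_lt_of_propagates (n := n) (B := fun j => f j ∉ W)
    (fun j hj hfj hprev hfj' => by
      obtain ⟨k', hk', hadj, hne, hk'W⟩ := step j (j + 1) (by omega) hj (Or.inl rfl) hfj hfj'
      rcases hprev with rfl | hprev
      · omega
      · exact hprev (by rwa [show j - 1 = k' by omega]))
    (fun j hj hfj hnext hfj' => by
      obtain ⟨k', hk', hadj, hne, hk'W⟩ := step (j + 1) j hj (by omega) (Or.inr rfl) hfj hfj'
      rcases hnext with hn | hnext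
      · omega
      · exact hnext (by rwa [show j + 2 = k' by omega]))
    (by
      have hS' : ∀ {v}, v ∈ S → v ∉ W := fun hv => disjoint_left.1 hSW hv
      rcases hS with h | h | ⟨q, hq, h₀, h₁⟩
      exacts [Or.inl (hS' h), Or.inr (Or.inl (hS' h)), Or.inr (Or.inr ⟨q, hq, hS' h₀, hS' h₁⟩)])
  exact disjoint_left.2 fun _ ⟨j, hj, hfj⟩ => hfj ▸ hblue j hj

variable {ι : Type*} {p : ι → ℕ → V} {len : ι → ℕ}

def pathUnion (p : ι → ℕ → V) (len : ι → ℕ) (A : Finset ι) : Set V :=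
  ⋃ i ∈ A, p i '' Iio (len i)

lemma pathUnion_erase [DecidableEq ι]
    (hinj : ∀ i j i' j', j < len i → j' < len i' → p i j = p i' j' → i = i' ∧ j = j')
    (A : Finset ι) (i : ι) :
    pathUnion p len (A.erase i) = pathUnion p len A \ p i '' Iio (len i) := by
  ext v
  simp only [pathUnion, mem_iUnion, mem_sdiff, Finset.mem_erase, exists_prop, mem_image, mem_Iio]
  constructor
  · rintro ⟨k, ⟨hki, hk⟩, t, ht, rfl⟩
    exact ⟨⟨k, hk, t, ht, rfl⟩, fun ⟨j, hj, he⟩ => hki (hinj k t i j ht hj he.symm).1⟩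
  · rintro ⟨⟨k, hk, t, ht, rfl⟩, hnot⟩
    exact ⟨k, ⟨fun hki => hnot ⟨t, hki ▸ ht, hki ▸ rfl⟩, hk⟩, t, ht, rfl⟩

lemma exists_leaf_path [Nonempty V] (hT : T.IsTree)
    (hchain : ∀ i j, j + 1 < len i → T.Adj (p i j) (p i (j + 1)))
    (hinj : ∀ i j i' j', j < len i → j' < len i' → p i j = p i' j' → i = i' ∧ j = j')
    {A : Finset ι} (hA : A.Nonempty) :
    ∃ i ∈ A, {y | y ∈ pathUnion p len A \ p i '' Iio (len i) ∧
      ∃ b ∈ p i '' Iio (len i), T.Adj b y}.Subsingleton := by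
  let r : V := Classical.arbitrary V
  let depth : ι → ℕ := fun k => sInf ((fun j => T.dist r (p k j)) '' Iio (len k))
  have hinj' : ∀ k, InjOn (p k) (Iio (len k)) := fun k j hj j' hj' h => (hinj k j k j' hj hj' h).2
  obtain ⟨i, hi, hdeepest⟩ := A.exists_max_image depth hA
  have toward_root : ∀ b ∈ p i '' Iio (len i), ∀ y ∈ pathUnion p len A \ p i '' Iio (len i),
      T.Adj b y → T.dist r b = T.dist r y + 1 := by
    rintro _ ⟨j, hj, rfl⟩ y ⟨hyU, hyi⟩ hby
    simp only [pathUnion, mem_iUnion, exists_prop] at hyU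
    obtain ⟨k, hk, hyk⟩ := hyU
    obtain ⟨s, hs, hsk⟩ : depth k ∈ (fun j => T.dist r (p k j)) '' Iio (len k) :=
      Nat.sInf_mem (by obtain ⟨t, ht, -⟩ := hyk; exact ⟨_, t, ht, rfl⟩)
    obtain ⟨w, hw⟩ := exists_walk_of_chain (hchain k) (hinj' k) ⟨s, hs, rfl⟩ hyk
    refine hT.dist_eq_add_one_of_walk hby w (fun hb => ?_) ?_
    · obtain ⟨t, ht, he⟩ := hw _ hb
      obtain rfl := (hinj k t i j ht hj he).1
      exact hyi hyk
    · calc T.dist r (p k s) = depth k := hsk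
        _ ≤ depth i := hdeepest k hk
        _ ≤ T.dist r (p i j) := Nat.sInf_le ⟨j, hj, rfl⟩
  refine ⟨i, hi, ?_⟩
  rintro y₁ ⟨hy₁, b₁, hb₁, h₁⟩ y₂ ⟨hy₂, b₂, hb₂, h₂⟩
  obtain ⟨w, hw⟩ := exists_walk_of_chain (hchain i) (hinj' i) hb₁ hb₂
  exact hT.eq_of_dist_eq_add_one h₁ h₂ (toward_root b₁ hb₁ y₁ hy₁ h₁)
    (toward_root b₂ hb₂ y₂ hy₂ h₂) w (fun h => hy₁.2 (hw _ h)) (fun h => hy₂.2 (hw _ h))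

theorem eq_empty_of_isFortIn (hT : T.IsTree)
    (hchain : ∀ i j, j + 1 < len i → T.Adj (p i j) (p i (j + 1)))
    (hinj : ∀ i j i' j', j < len i → j' < len i' → p i j = p i' j' → i = i' ∧ j = j')
    (A : Finset ι) {S W : Set V} (hW : IsFortIn T (pathUnion p len A) W) (hSW : Disjoint S W)
    (hS : ∀ i ∈ A, ContainsEndOrEdge S (p i) (len i)) : W = ∅ := by
  classical
  induction A using Finset.strongInduction generalizing W with
  | H A ih =>
  obtain rfl | ⟨w₀, hw₀⟩ := W.eq_empty_or_nonempty
  · rfl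
  have : Nonempty V := ⟨w₀⟩
  have hA : A.Nonempty := by
    have := hW.1 hw₀
    simp only [pathUnion, mem_iUnion, exists_prop] at this
    obtain ⟨i, hi, -⟩ := this
    exact ⟨i, hi⟩
  obtain ⟨i, hi, hleaf⟩ := exists_leaf_path hT hchain hinj hA
  set P := p i '' Iio (len i)
  have ih' : ∀ W' ⊆ W, IsFortIn T (pathUnion p len A \ P) W' → W' = ∅ := fun W' hW' h =>
    ih _ (Finset.erase_ssubset hi) (pathUnion_erase hinj A i ▸ h) (hSW.mono_right hW')
      fun k hk => hS k (Finset.mem_of_mem_erase hk)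
  by_cases hx : ∃ x ∈ W \ P, ∃ b ∈ P, T.Adj b x
  · obtain ⟨x, hx, b, hb, hbx⟩ := hx
    have hrest : IsFortIn T (pathUnion p len A \ P) (W \ P) := hW.diff fun v hv hvW b' hb' hvb' =>
      hvW (hleaf ⟨⟨hW.1 hx.1, hx.2⟩, b, hb, hbx⟩ ⟨hv, b', hb', hvb'.symm⟩ ▸ hx.1)
    exact ((ih' _ sdiff_subset hrest ▸ hx : x ∈ (∅ : Set V))).elim
  · have hPW : Disjoint P W := disjoint_image_of_isFortIn hT.isAcyclic (hchain i)
      (fun j hj j' hj' h => (hinj i j i j' hj hj' h).2) hW (fun v hv => mem_iUnion₂.2 ⟨i, hi, hv⟩)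
      (fun b hb y hy hby hyW => hx ⟨y, ⟨hyW, hy⟩, b, hb, hby⟩) hSW (hS i hi)
    exact ih' W subset_rfl (hW.mono sdiff_subset (subset_sdiff.2 ⟨hW.1, hPW.symm⟩))

end PathCover

end ZF

theorem pathcover_choice_zfs_general {V : Type*} (T : SimpleGraph V)
    (hT : T.IsTree) (m : ℕ) (len : Fin m → ℕ)
    (p : Fin m → ℕ → V)
    (hchain : ∀ i j, j + 1 < len i → T.Adj (p i j) (p i (j + 1)))
    (hinj : ∀ i j i' j', j < len i → j' < len i' → p i j = p i' j' → i = i' ∧ j = j')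
    (hcover : ∀ v, ∃ i j, j < len i ∧ p i j = v)
    (pick : Fin m → Set V)
    (hpick : ∀ i, pick i = {p i 0} ∨ pick i = {p i (len i - 1)} ∨
      ∃ j, 1 ≤ j ∧ j + 1 ≤ len i - 2 ∧ pick i = {p i j, p i (j + 1)}) :
    IsZFS T (⋃ i, pick i) := by
  refine isZFS_of_forall_isFortIn fun W hW hSW => ?_
  have hU : pathUnion p len Finset.univ = univ := eq_univ_of_forall fun v => by
    obtain ⟨i, j, hj, rfl⟩ := hcover v
    exact mem_iUnion₂.2 ⟨i, Finset.mem_univ i, j, hj, rfl⟩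
  refine eq_empty_of_isFortIn hT hchain hinj Finset.univ (hU ▸ hW) hSW fun i _ => ?_
  have hsub : pick i ⊆ ⋃ i, pick i := subset_iUnion pick i
  rcases hpick i with h | h | ⟨j, -, hj, h⟩ <;> rw [h] at hsub
  · exact Or.inl (hsub rfl)
  · exact Or.inr (Or.inl (hsub rfl))
  · exact Or.inr (Or.inr ⟨j, by omega, hsub (by simp), hsub (by simp)⟩)

/-- Given any path cover of a tree `T` (a family of `m` vertex-disjoint
induced paths covering all vertices, the `i`-th path having `len i` vertices
`p i 0, …, p i (len i - 1)`), the set `S` formed by choosing from each path either one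
of its end vertices or a pair of adjacent internal vertices is a zero forcing set. -/
theorem pathcover_choice_zfs {V : Type*} [Fintype V] (T : SimpleGraph V)
    (hT : T.IsTree) (m : ℕ) (len : Fin m → ℕ) (hlen : ∀ i, 1 ≤ len i)
    (p : Fin m → ℕ → V)
    (hchain : ∀ i j, j + 1 < len i → T.Adj (p i j) (p i (j + 1)))
    (hinj : ∀ i j i' j', j < len i → j' < len i' → p i j = p i' j' → i = i' ∧ j = j')
    (hcover : ∀ v, ∃ i j, j < len i ∧ p i j = v)
    (pick : Fin m → Set V)
    (hpick : ∀ i, pick i = {p i 0} ∨ pick i = {p i (len i - 1)} ∨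
      ∃ j, 1 ≤ j ∧ j + 1 ≤ len i - 2 ∧ pick i = {p i j, p i (j + 1)}) :
    IsZFS T (⋃ i, pick i) :=
  pathcover_choice_zfs_general T hT m len p hchain hinj hcover pick hpick
end

section
/- If T is a tree with no double pendants, then every vertex of T lies in some minimal zero forcing set of T. -/
open ZF SimpleGraph

/-!
Root `T` at `x` and let `D` consist of `x` and one designated child of every vertex that has
children, a pendant child whenever there is one. Then `{x} ∪ Dᶜ` is zero forcing: going down
from the root, every vertex of `D` is the last white neighbor of its parent. Without double
pendants every vertex outside `D` has a child in `D`, so the vertices of `D` whose path to the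
root never meets two consecutive vertices outside `D` form a fort containing `x`. Hence `Dᶜ` is
not zero forcing, and every minimal zero forcing set inside `{x} ∪ Dᶜ` contains `x`.
-/

namespace ZF

variable {V : Type*} {G : SimpleGraph V} {S Z : Set V}

def IsFort (G : SimpleGraph V) (Z : Set V) : Prop :=
  ∀ ⦃u w⦄, u ∉ Z → w ∈ Z → G.Adj u w → ∃ z ∈ Z, z ≠ w ∧ G.Adj u z

theorem Forced.mono_s10 {S' : Set V} (hS : S ⊆ S') {v : V} (h : Forced G S v) : Forced G S' v := by
  induction h with
  | init hv => exact .init (hS hv)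
  | force _ hadj _ ihu ihx => exact .force ihu hadj ihx

theorem Forced.notMem_of_isFort (hZ : IsFort G Z) (hSZ : Disjoint S Z) {v : V}
    (h : Forced G S v) : v ∉ Z := by
  induction h with
  | init hv => exact hSZ.notMem_of_mem_left hv
  | force _ hadj _ ihu ihx =>
    intro hw
    obtain ⟨z, hzZ, hzw, hz⟩ := hZ ihu hw hadj
    exact ihx z hz hzw hzZ

theorem exists_isMinimalZFS_mem [Finite V] {x : V} (hS : IsZFS G S)
    (hx : ¬ IsZFS G (S \ {x})) : ∃ S', IsMinimalZFS G S' ∧ x ∈ S' := by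
  obtain ⟨S', hS'S, hmin⟩ := exists_minimal_le_of_wellFoundedLT (IsZFS G) S hS
  refine ⟨S', ⟨hmin.prop, fun S'' hlt hS'' => hlt.not_ge (hmin.le_of_le hS'' hlt.le)⟩, ?_⟩
  by_contra hxS'
  have hS'sub : S' ⊆ S \ {x} := fun u hu => ⟨hS'S hu, fun hux => hxS' (hux ▸ hu)⟩
  exact hx fun v => (hmin.prop v).mono_s10 hS'sub

end ZF

namespace SimpleGraph

variable {V : Type*} {G : SimpleGraph V} {r u v w : V}

open Classical in
/-- A neighbor of `v` one step closer to `r`; junk value `v` when there is none, e.g. at `r`. -/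
noncomputable def parent (G : SimpleGraph V) (r v : V) : V :=
  if h : ∃ u, G.Adj v u ∧ G.dist r u + 1 = G.dist r v then h.choose else v

def IsChild (G : SimpleGraph V) (r v w : V) : Prop := w ≠ r ∧ G.parent r w = v

theorem isChild_parent (hv : v ≠ r) : G.IsChild r (G.parent r v) v := ⟨hv, rfl⟩

theorem parent_root : G.parent r r = r := by
  simp [parent]

theorem Connected.exists_adj_dist_add_one (hG : G.Connected) (hv : v ≠ r) :
    ∃ u, G.Adj v u ∧ G.dist r u + 1 = G.dist r v := by
  obtain ⟨p, hp⟩ := hG.exists_walk_length_eq_dist v r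
  cases p with
  | nil => exact absurd rfl hv
  | @cons _ u _ hadj q =>
    refine ⟨u, hadj, ?_⟩
    have hq : G.dist u r ≤ q.length := dist_le q
    have htri : G.dist r v ≤ G.dist r u + G.dist u v := hG.dist_triangle
    rw [dist_eq_one_iff_adj.mpr hadj.symm] at htri
    rw [Walk.length_cons, dist_comm (u := v)] at hp
    rw [dist_comm] at hq
    omega

theorem Connected.parent_spec (hG : G.Connected) (hv : v ≠ r) :
    G.Adj v (G.parent r v) ∧ G.dist r (G.parent r v) + 1 = G.dist r v := by
  have h := hG.exists_adj_dist_add_one hv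
  rw [parent, dif_pos h]
  exact h.choose_spec

theorem IsChild.adj (h : G.IsChild r v w) (hG : G.Connected) : G.Adj v w :=
  h.2 ▸ (hG.parent_spec h.1).1.symm

theorem IsChild.dist_eq (h : G.IsChild r v w) (hG : G.Connected) :
    G.dist r w = G.dist r v + 1 :=
  h.2 ▸ (hG.parent_spec h.1).2.symm

theorem IsTree.parent_eq_of_adj (hG : G.IsTree) (hadj : G.Adj v u)
    (hu : G.dist r u + 1 = G.dist r v) : G.parent r v = u := by
  have hv : v ≠ r := by
    rintro rfl
    simp at hu
  obtain ⟨hadj', hp⟩ := hG.connected.parent_spec hv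
  obtain ⟨q, hq⟩ := hG.connected.exists_walk_length_eq_dist u r
  obtain ⟨q', hq'⟩ := hG.connected.exists_walk_length_eq_dist (G.parent r v) r
  have isPath_cons : ∀ {a} (h : G.Adj v a) (p : G.Walk a r), p.length = G.dist a r →
      G.dist r a + 1 = G.dist r v → (Walk.cons h p).IsPath := fun h p hp ha => by
    refine Walk.isPath_of_length_eq_dist _ ?_
    rw [Walk.length_cons, hp, dist_comm, ha, dist_comm]
  have := (hG.existsUnique_path v r).unique (isPath_cons hadj' q' hq' hp) (isPath_cons hadj q hq hu)
  simpa using congrArg Walk.snd this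

theorem IsTree.isChild_or_isChild_of_adj (hG : G.IsTree) (hadj : G.Adj u w) :
    G.IsChild r w u ∨ G.IsChild r u w := by
  rcases hG.dist_eq_dist_add_one_of_adj r hadj with h | h
  · refine .inl ⟨?_, hG.parent_eq_of_adj hadj h.symm⟩
    rintro rfl
    simp at h
  · refine .inr ⟨?_, hG.parent_eq_of_adj hadj.symm h.symm⟩
    rintro rfl
    simp at h

theorem IsTree.isZFS_insert_compl (hG : G.IsTree) {D : Set V}
    (hD : ∀ v, {w | w ∈ D ∧ G.IsChild r v w}.Subsingleton) : IsZFS G (insert r Dᶜ) := by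
  intro v
  induction hn : G.dist r v using Nat.strong_induction_on generalizing v with
  | _ n ih =>
  subst hn
  by_cases hvS : v ∈ insert r Dᶜ
  · exact .init hvS
  obtain ⟨hvr, hvD⟩ : v ≠ r ∧ v ∈ D := by simpa using hvS
  have forced_of_lt : ∀ u, G.dist r u < G.dist r v → Forced G (insert r Dᶜ) u :=
    fun u hu => ih _ hu u rfl
  have hvp := isChild_parent (G := G) hvr
  have hdist := hvp.dist_eq hG.connected
  -- the parent of `v` forces `v`: all its other children lie outside `D`
  refine .force (forced_of_lt _ (by omega)) (hvp.adj hG.connected) fun z hz hzv => ?_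
  rcases hG.isChild_or_isChild_of_adj (r := r) hz with hpz | hzc
  · have := hpz.dist_eq hG.connected
    exact forced_of_lt _ (by omega)
  · refine .init (Set.mem_insert_iff.mpr (or_iff_not_imp_left.mpr fun _ hzD => hzv ?_))
    exact hD _ ⟨hzD, hzc⟩ ⟨hvD, hvr, rfl⟩

/-- The vertices of `D` whose path to the root `r` never passes through two consecutive
vertices outside `D`. -/
def rootPathFort (G : SimpleGraph V) (r : V) (D : Set V) : Set V :=
  {u | u ∈ D ∧ ∀ k, (G.parent r)^[k] u ∈ D ∨ (G.parent r)^[k + 1] u ∈ D}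

theorem root_mem_rootPathFort {D : Set V} (hr : r ∈ D) : r ∈ G.rootPathFort r D :=
  ⟨hr, fun k => .inl (by rwa [Function.iterate_fixed parent_root])⟩

theorem IsTree.isFort_rootPathFort (hG : G.IsTree) {D : Set V} (hr : r ∈ D)
    (hD : ∀ u ∉ D, ∃ w ∈ D, G.IsChild r u w) : IsFort G (G.rootPathFort r D) := by
  intro u w hu ⟨hwD, hw⟩ hadj
  by_cases hgood : ∀ k, (G.parent r)^[k] u ∈ D ∨ (G.parent r)^[k + 1] u ∈ D
  · have huD : u ∉ D := fun huD => hu ⟨huD, hgood⟩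
    have hur : u ≠ r := fun h => huD (h ▸ hr)
    obtain ⟨c, hcD, hc⟩ := hD u huD
    have hpZ : G.parent r u ∈ G.rootPathFort r D :=
      ⟨(hgood 0).resolve_left huD,
        fun k => by simpa only [← Function.iterate_succ_apply] using hgood (k + 1)⟩
    have hcZ : c ∈ G.rootPathFort r D := by
      refine ⟨hcD, fun k => ?_⟩
      cases k with
      | zero => exact .inl hcD
      | succ k => simpa only [Function.iterate_succ_apply, hc.2] using hgood k
    have hpc : G.parent r u ≠ c := by
      intro hpc
      have h1 := hc.dist_eq hG.connected
      have h2 := (isChild_parent (G := G) hur).dist_eq hG.connected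
      rw [← hpc] at h1
      omega
    by_cases hwp : w = G.parent r u
    · exact ⟨c, hcZ, hwp ▸ hpc.symm, hc.adj hG.connected⟩
    · exact ⟨_, hpZ, Ne.symm hwp, ((isChild_parent hur).adj hG.connected).symm⟩
  · simp only [not_forall, not_or] at hgood
    obtain ⟨k, hk, hk1⟩ := hgood
    exfalso
    rcases hG.isChild_or_isChild_of_adj (r := r) hadj with ⟨-, rfl⟩ | ⟨-, hwu⟩
    · cases k with
      | zero => exact hk1 hwD
      | succ k =>
        rw [Function.iterate_succ_apply] at hk hk1
        exact (hw k).elim hk hk1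
    · have := hw (k + 1)
      rw [Function.iterate_succ_apply, hwu, Function.iterate_succ_apply, hwu] at this
      exact this.elim hk hk1

theorem IsTree.neighborSet_eq_of_isChild (hG : G.IsTree) (h : G.IsChild r v w)
    (hleaf : ∀ z, ¬ G.IsChild r w z) : G.neighborSet w = {v} := by
  ext z
  simp only [mem_neighborSet, Set.mem_singleton_iff]
  refine ⟨fun hz => ?_, fun hz => hz ▸ (h.adj hG.connected).symm⟩
  rcases hG.isChild_or_isChild_of_adj (r := r) hz with ⟨-, hzw⟩ | hc
  · exact hzw.symm.trans h.2
  · exact absurd hc (hleaf z)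

open Classical in
noncomputable def designatedChild (G : SimpleGraph V) (r v : V) : V :=
  if h : ∃ w, G.IsChild r v w ∧ G.neighborSet w = {v} then h.choose
  else if h' : ∃ w, G.IsChild r v w then h'.choose else v

theorem isChild_designatedChild (h : ∃ w, G.IsChild r v w) :
    G.IsChild r v (G.designatedChild r v) := by
  unfold designatedChild
  split_ifs with hp
  · exact hp.choose_spec.1
  · exact h.choose_spec

theorem neighborSet_designatedChild (h : ∃ w, G.IsChild r v w ∧ G.neighborSet w = {v}) :
    G.neighborSet (G.designatedChild r v) = {v} := by
  rw [designatedChild, dif_pos h]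
  exact h.choose_spec.2

theorem IsTree.exists_designated (hG : G.IsTree) (r : V)
    (hnd : ¬ ∃ u w v : V, u ≠ w ∧ G.neighborSet u = {v} ∧ G.neighborSet w = {v}) :
    ∃ D : Set V, r ∈ D ∧ (∀ v, {w | w ∈ D ∧ G.IsChild r v w}.Subsingleton) ∧
      ∀ u ∉ D, ∃ w ∈ D, G.IsChild r u w := by
  set D : Set V := {w | w = r ∨ w = G.designatedChild r (G.parent r w)}
  have eq_of_mem {v w} (hw : w ∈ D) (hvw : G.IsChild r v w) : w = G.designatedChild r v :=
    hvw.2 ▸ hw.resolve_left hvw.1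
  refine ⟨D, .inl rfl, fun v a ⟨haD, ha⟩ b ⟨hbD, hb⟩ => ?_, fun u hu => ?_⟩
  · exact (eq_of_mem haD ha).trans (eq_of_mem hbD hb).symm
  obtain ⟨hur, hud⟩ := not_or.mp hu
  -- a childless `u ∉ D` would be a second pendant child of its parent
  have hc : G.IsChild r u (G.designatedChild r u) := by
    by_cases h : ∃ w, G.IsChild r u w
    · exact isChild_designatedChild h
    · have hpend := hG.neighborSet_eq_of_isChild (isChild_parent hur) (not_exists.mp h)
      exact (hnd ⟨u, _, _, hud,
        hpend, neighborSet_designatedChild ⟨u, isChild_parent hur, hpend⟩⟩).elim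
  exact ⟨_, .inr (by rw [hc.2]), hc⟩

end SimpleGraph

/-- If `T` is a tree with no double pendants, then every vertex of `T`
lies in some minimal zero forcing set of `T`. -/
theorem no_double_pendant_every_vertex_minimal {V : Type*} [Fintype V]
    (T : SimpleGraph V) (hT : T.IsTree)
    (hnd : ¬ ∃ u w v : V, u ≠ w ∧ T.neighborSet u = {v} ∧ T.neighborSet w = {v})
    (x : V) :
    ∃ S : Set V, IsMinimalZFS T S ∧ x ∈ S := by
  obtain ⟨D, hxD, hD_subsingleton, hD_child⟩ := hT.exists_designated x hnd
  refine exists_isMinimalZFS_mem (hT.isZFS_insert_compl hD_subsingleton) fun hZFS => ?_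
  rw [Set.insert_sdiff_self_of_notMem (Set.notMem_compl_iff.mpr hxD)] at hZFS
  exact (hZFS x).notMem_of_isFort (hT.isFort_rootPathFort hxD hD_child)
    (disjoint_compl_left.mono_right fun _ h => h.1) (root_mem_rootPathFort hxD)
end
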